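/- Let V be a commutative ring and I an idempotent ideal with Ĩ = I ⊗_V I flat. For any commutative V-algebra A, define A_{!!} := V ⊕_{Ĩ} (Ĩ ⊗_V A), i.e., the pushout of V ← Ĩ → Ĩ ⊗_V A along the inclusion Ĩ → V and the map induced by the unit of A. Then A_{!!} carries a commutative V-algebra structure such that the canonical map A_{!!} → A is a V-algebra homomorphism. -/

import Mathlib

open TensorProduct

noncomputable section

set_option maxSynthPendingDepth 5

variable {V : Type} [CommRing V]

/-- The multiplication map `Ĩ = I ⊗[V] I → V` induced by the inclusion. -/
def idealMul (I : Ideal V) : (↥I ⊗[V] ↥I) →ₗ[V] V :=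
  TensorProduct.lift (((LinearMap.mul V V).comp I.subtype).compl₂ I.subtype)

variable (I : Ideal V) (A : Type) [CommRing A] [Algebra V A]

/-- The map `Ĩ → Ĩ ⊗ A`, `x ↦ x ⊗ 1`, induced by the unit of `A`. -/
def unitTensor : (↥I ⊗[V] ↥I) →ₗ[V] ((↥I ⊗[V] ↥I) ⊗[V] A) :=
  (TensorProduct.mk V (↥I ⊗[V] ↥I) A).flip 1

/-- The structure map of the pushout `V ⊕_Ĩ (Ĩ ⊗ A)`. -/
def bangRel : (↥I ⊗[V] ↥I) →ₗ[V] (V × ((↥I ⊗[V] ↥I) ⊗[V] A)) :=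
  (idealMul I).prod (-(unitTensor I A))

/-- `A_{!!} = V ⊕_Ĩ (Ĩ ⊗ A)`, the pushout of `V ← Ĩ → Ĩ ⊗ A` in `V`-modules. -/
def Bang : Type :=
  (V × ((↥I ⊗[V] ↥I) ⊗[V] A)) ⧸ LinearMap.range (bangRel I A)

instance : AddCommGroup (Bang I A) := by unfold Bang; infer_instance
instance : Module V (Bang I A) := by unfold Bang; infer_instance

/-- The action map `Ĩ ⊗ A → A`. -/
def tildeAct : ((↥I ⊗[V] ↥I) ⊗[V] A) →ₗ[V] A :=
  TensorProduct.lift ((LinearMap.lsmul V A).comp (idealMul I))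

/-- The canonical map `A_{!!} → A`. -/
def bangToA : Bang I A →ₗ[V] A :=
  Submodule.liftQ _ ((Algebra.linearMap V A).coprod (tildeAct I A)) (by
    rintro y ⟨x, rfl⟩
    simp only [LinearMap.mem_ker, bangRel, unitTensor, LinearMap.prod_apply,
      LinearMap.coprod_apply, Function.prod, LinearMap.neg_apply, map_neg,
      LinearMap.flip_apply, TensorProduct.mk_apply, tildeAct,
      TensorProduct.lift.tmul, LinearMap.coe_comp, Function.comp_apply,
      LinearMap.lsmul_apply, Algebra.linearMap_apply,
      Algebra.algebraMap_eq_smul_one, smul_eq_mul, mul_one]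
    ring)


/-!
`Ĩ ⊗ A = (I ⊗ I) ⊗ A` is a tensor product of non-unital commutative `V`-algebras, and
`V × (Ĩ ⊗ A)` is its unitization. In `Ĩ` one has `x * y = μ(y) • x` for the multiplication map
`μ : Ĩ → V`, hence `x * (z ⊗ 1) = μ(z) • x` in `Ĩ ⊗ A`; this makes the image of the pushout relation
`z ↦ (μ z, -(z ⊗ 1))` an ideal of the unitization. So `A_{!!}` is a quotient ring of the
unitization, and the canonical map to `A` is the algebra map given by the universal property of
the unitization applied to the non-unital algebra map `Ĩ ⊗ A → A`, `t ⊗ a ↦ μ(t) • a`.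
-/

theorem LinearEquiv.exists_commAlgebra_transfer {R N B C : Type*} [CommSemiring R]
    [AddCommMonoid N] [Module R N] [CommSemiring B] [Algebra R B] [Semiring C] [Algebra R C]
    (e : N ≃ₗ[R] B) (f : B →ₐ[R] C) (g : N →ₗ[R] C) (hg : ∀ x, g x = f (e x)) :
    ∃ (mul : N →ₗ[R] N →ₗ[R] N) (one : N),
      (∀ x y : N, mul x y = mul y x) ∧
      (∀ x y z : N, mul (mul x y) z = mul x (mul y z)) ∧
      (∀ x : N, mul one x = x) ∧
      g one = 1 ∧
      (∀ x y : N, g (mul x y) = g x * g y) := by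
  refine ⟨((LinearMap.mul R B).compl₁₂ e.toLinearMap e.toLinearMap).compr₂ e.symm.toLinearMap,
    e.symm 1, fun x y => ?_, fun x y z => ?_, fun x => ?_, ?_, fun x y => ?_⟩ <;>
  simp [hg, mul_comm, mul_left_comm]

namespace Algebra.TensorProduct

variable {R B C : Type*} [CommSemiring R]

instance instNonUnitalCommSemiring [NonUnitalCommSemiring B] [Module R B] [SMulCommClass R B B]
    [IsScalarTower R B B] [NonUnitalCommSemiring C] [Module R C] [SMulCommClass R C C]
    [IsScalarTower R C C] : NonUnitalCommSemiring (B ⊗[R] C) where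
  mul_comm x y := by
    induction x with
    | zero => simp
    | add x₁ x₂ h₁ h₂ => simp [add_mul, mul_add, h₁, h₂]
    | tmul b c =>
      induction y with
      | zero => simp
      | add y₁ y₂ h₁ h₂ => simp [add_mul, mul_add, h₁, h₂]
      | tmul b' c' => rw [tmul_mul_tmul, tmul_mul_tmul, mul_comm b, mul_comm c]

instance instNonUnitalCommRing [NonUnitalCommRing B] [Module R B] [SMulCommClass R B B]
    [IsScalarTower R B B] [NonUnitalCommRing C] [Module R C] [SMulCommClass R C C]
    [IsScalarTower R C C] : NonUnitalCommRing (B ⊗[R] C) :=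
  { instNonUnitalRing, instNonUnitalCommSemiring with }

end Algebra.TensorProduct

local notation "Ĩ" => TensorProduct V I I

@[simp]
lemma idealMul_tmul (i j : ↥I) : idealMul I (i ⊗ₜ j) = i * j := rfl

lemma mul_eq_idealMul_smul (x y : Ĩ) : x * y = idealMul I y • x := by
  induction y with
  | zero => simp
  | add y₁ y₂ h₁ h₂ => rw [mul_add, h₁, h₂, map_add, add_smul]
  | tmul i' j' =>
    induction x with
    | zero => simp
    | add x₁ x₂ h₁ h₂ => rw [add_mul, h₁, h₂, smul_add]
    | tmul i j =>
      have hi : i * i' = (i' : V) • i := Subtype.ext (mul_comm _ _)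
      have hj : j * j' = (j' : V) • j := Subtype.ext (mul_comm _ _)
      rw [Algebra.TensorProduct.tmul_mul_tmul, hi, hj, idealMul_tmul, ← smul_tmul_smul]

lemma idealMul_mul (x y : Ĩ) : idealMul I (x * y) = idealMul I x * idealMul I y := by
  rw [mul_eq_idealMul_smul, map_smul, smul_eq_mul, mul_comm]

lemma mul_unitTensor (x : Ĩ ⊗[V] A) (z : Ĩ) :
    x * unitTensor I A z = idealMul I z • x := by
  induction x with
  | zero => simp
  | add x₁ x₂ h₁ h₂ => rw [add_mul, h₁, h₂, smul_add]
  | tmul t a =>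
    rw [unitTensor, LinearMap.flip_apply, mk_apply, Algebra.TensorProduct.tmul_mul_tmul, mul_one,
      mul_eq_idealMul_smul, smul_tmul']

@[simp]
lemma tildeAct_tmul (t : Ĩ) (a : A) : tildeAct I A (t ⊗ₜ a) = idealMul I t • a := rfl

lemma tildeAct_mul (x y : Ĩ ⊗[V] A) :
    tildeAct I A (x * y) = tildeAct I A x * tildeAct I A y := by
  induction x with
  | zero => simp
  | add x₁ x₂ h₁ h₂ => rw [add_mul, map_add, map_add, h₁, h₂, add_mul]
  | tmul t a =>
    induction y with
    | zero => simp
    | add y₁ y₂ h₁ h₂ => rw [mul_add, map_add, map_add, h₁, h₂, mul_add]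
    | tmul s b =>
      rw [Algebra.TensorProduct.tmul_mul_tmul, tildeAct_tmul, tildeAct_tmul, tildeAct_tmul,
        idealMul_mul, smul_mul_smul_comm]

def tildeActHom : Ĩ ⊗[V] A →ₙₐ[V] A :=
  { tildeAct I A with
    map_zero' := map_zero _
    map_mul' := tildeAct_mul I A }

def unitizationRel : Ĩ →ₗ[V] Unitization V (Ĩ ⊗[V] A) :=
  (Unitization.linearEquiv V V _).symm.toLinearMap ∘ₗ bangRel I A

lemma mul_unitizationRel (u : Unitization V (Ĩ ⊗[V] A)) (z : Ĩ) :
    u * unitizationRel I A z = unitizationRel I A (u.fst • z) := by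
  ext
  · simp [unitizationRel, bangRel]
  · simp [unitizationRel, bangRel, mul_unitTensor]

def bangIdeal : Ideal (Unitization V (Ĩ ⊗[V] A)) where
  toAddSubmonoid := (LinearMap.range (unitizationRel I A)).toAddSubmonoid
  smul_mem' := by
    rintro u _ ⟨z, rfl⟩
    exact ⟨u.fst • z, (mul_unitizationRel I A u z).symm⟩

def bangEquiv : Bang I A ≃ₗ[V] Unitization V (Ĩ ⊗[V] A) ⧸ bangIdeal I A :=
  (Submodule.Quotient.equiv _ ((bangIdeal I A).restrictScalars V)
      (Unitization.linearEquiv V V _).symm (LinearMap.range_comp _ _).symm).trans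
    (Submodule.Quotient.restrictScalarsEquiv V (bangIdeal I A))

def bangAlgHom : (Unitization V (Ĩ ⊗[V] A) ⧸ bangIdeal I A) →ₐ[V] A :=
  Ideal.Quotient.liftₐ _ (Unitization.lift (tildeActHom I A)) (by
    rintro _ ⟨z, rfl⟩
    simp [unitizationRel, bangRel, unitTensor, tildeActHom, Algebra.smul_def])

lemma bangToA_eq (x : Bang I A) : bangToA I A x = bangAlgHom I A (bangEquiv I A x) := by
  obtain ⟨p, rfl⟩ := Submodule.Quotient.mk_surjective _ x
  rfl

theorem bang_comm_algebra :
    ∃ (mul : Bang I A →ₗ[V] Bang I A →ₗ[V] Bang I A) (one : Bang I A),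
      (∀ x y : Bang I A, mul x y = mul y x) ∧
      (∀ x y z : Bang I A, mul (mul x y) z = mul x (mul y z)) ∧
      (∀ x : Bang I A, mul one x = x) ∧
      bangToA I A one = 1 ∧
      (∀ x y : Bang I A, bangToA I A (mul x y) = bangToA I A x * bangToA I A y) :=
  (bangEquiv I A).exists_commAlgebra_transfer (bangAlgHom I A) (bangToA I A) (bangToA_eq I A)

end
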